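/- For all positive integers d, a, b with a + b = d, the set S₁ = {0, d, 2d, 4d, 4d+a, 4d+a+b} satisfies |S₁+S₁| ≤ |S₁-S₁| (i.e., S₁ is not sum-dominant). -/
import Mathlib


open Finset
open scoped Pointwise

theorem stmt_5 (d a b : ℤ) (hd : 0 < d) (ha : 0 < a) (hb : 0 < b) (hab : a + b = d) :
    ((({0, d, 2*d, 4*d, 4*d+a, 4*d+a+b} : Finset ℤ)) + {0, d, 2*d, 4*d, 4*d+a, 4*d+a+b}).card ≤
      ((({0, d, 2*d, 4*d, 4*d+a, 4*d+a+b} : Finset ℤ)) - {0, d, 2*d, 4*d, 4*d+a, 4*d+a+b}).card := by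
  have hb' : b = d - a := by linarith
  subst hb'
  have had : a < d := by linarith
  rw [show 4*d+a+(d-a) = 5*d from by ring]
  have hS : ∀ u : ℤ, (u = 0 ∨ u = d ∨ u = 2*d ∨ u = 4*d ∨ u = 4*d+a ∨ u = 5*d) →
      u ∈ ({0, d, 2*d, 4*d, 4*d+a, 5*d} : Finset ℤ) := by
    intro u hu
    simp only [Finset.mem_insert, Finset.mem_singleton]
    exact hu
  have m0 : (0:ℤ) ∈ ({0, d, 2*d, 4*d, 4*d+a, 5*d} : Finset ℤ) := hS 0 (Or.inl rfl)
  have m1 : d ∈ ({0, d, 2*d, 4*d, 4*d+a, 5*d} : Finset ℤ) := hS d (Or.inr (Or.inl rfl))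
  have m2 : 2*d ∈ ({0, d, 2*d, 4*d, 4*d+a, 5*d} : Finset ℤ) :=
    hS (2*d) (Or.inr (Or.inr (Or.inl rfl)))
  have m4 : 4*d ∈ ({0, d, 2*d, 4*d, 4*d+a, 5*d} : Finset ℤ) :=
    hS (4*d) (Or.inr (Or.inr (Or.inr (Or.inl rfl))))
  have m4a : 4*d+a ∈ ({0, d, 2*d, 4*d, 4*d+a, 5*d} : Finset ℤ) :=
    hS (4*d+a) (Or.inr (Or.inr (Or.inr (Or.inr (Or.inl rfl)))))
  have m5 : 5*d ∈ ({0, d, 2*d, 4*d, 4*d+a, 5*d} : Finset ℤ) :=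
    hS (5*d) (Or.inr (Or.inr (Or.inr (Or.inr (Or.inr rfl)))))
  -- upper bound for the sumset
  have hsub1 : ({0, d, 2*d, 4*d, 4*d+a, 5*d} : Finset ℤ) + {0, d, 2*d, 4*d, 4*d+a, 5*d} ⊆
      ([0, d, 2*d, 3*d, 4*d, 5*d, 6*d, 7*d, 8*d, 9*d, 10*d,
        4*d+a, 5*d+a, 6*d+a, 8*d+a, 9*d+a, 8*d+2*a] : List ℤ).toFinset := by
    intro x hx
    rw [Finset.mem_add] at hx
    obtain ⟨y, hy, z, hz, rfl⟩ := hx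
    simp only [Finset.mem_insert, Finset.mem_singleton] at hy hz
    simp only [List.mem_toFinset, List.mem_cons, List.not_mem_nil, or_false]
    omega
  have h1 : (({0, d, 2*d, 4*d, 4*d+a, 5*d} : Finset ℤ) + {0, d, 2*d, 4*d, 4*d+a, 5*d}).card ≤ 17 :=
    calc _ ≤ _ := Finset.card_le_card hsub1
    _ ≤ ([0, d, 2*d, 3*d, 4*d, 5*d, 6*d, 7*d, 8*d, 9*d, 10*d,
        4*d+a, 5*d+a, 6*d+a, 8*d+a, 9*d+a, 8*d+2*a] : List ℤ).length := List.toFinset_card_le _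
    _ = 17 := rfl
  -- lower bound for the difference set
  have hnodup : ([0, d, 2*d, 3*d, 4*d, 5*d, a, 2*d+a, 3*d+a, 4*d+a,
      -d, -(2*d), -(3*d), -(4*d), -(5*d), -a, -(2*d+a), -(3*d+a), -(4*d+a)] : List ℤ).Nodup := by
    simp only [List.nodup_cons, List.mem_cons, List.not_mem_nil, or_false,
      List.nodup_nil, and_true, not_or]
    norm_num
    omega
  have hsub2 : ([0, d, 2*d, 3*d, 4*d, 5*d, a, 2*d+a, 3*d+a, 4*d+a,
      -d, -(2*d), -(3*d), -(4*d), -(5*d), -a, -(2*d+a), -(3*d+a), -(4*d+a)] : List ℤ).toFinset ⊆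
      ({0, d, 2*d, 4*d, 4*d+a, 5*d} : Finset ℤ) - {0, d, 2*d, 4*d, 4*d+a, 5*d} := by
    intro x hx
    simp only [List.mem_toFinset, List.mem_cons, List.not_mem_nil, or_false] at hx
    rw [Finset.mem_sub]
    rcases hx with hx | hx | hx | hx | hx | hx | hx | hx | hx | hx | hx | hx | hx | hx | hx | hx | hx | hx | hx
    · exact ⟨_, m0, _, m0, by rw [hx]; ring⟩
    · exact ⟨_, m1, _, m0, by rw [hx]; ring⟩
    · exact ⟨_, m2, _, m0, by rw [hx]; ring⟩
    · exact ⟨_, m4, _, m1, by rw [hx]; ring⟩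
    · exact ⟨_, m4, _, m0, by rw [hx]; ring⟩
    · exact ⟨_, m5, _, m0, by rw [hx]; ring⟩
    · exact ⟨_, m4a, _, m4, by rw [hx]; ring⟩
    · exact ⟨_, m4a, _, m2, by rw [hx]; ring⟩
    · exact ⟨_, m4a, _, m1, by rw [hx]; ring⟩
    · exact ⟨_, m4a, _, m0, by rw [hx]; ring⟩
    · exact ⟨_, m0, _, m1, by rw [hx]; ring⟩
    · exact ⟨_, m0, _, m2, by rw [hx]; ring⟩
    · exact ⟨_, m1, _, m4, by rw [hx]; ring⟩
    · exact ⟨_, m0, _, m4, by rw [hx]; ring⟩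
    · exact ⟨_, m0, _, m5, by rw [hx]; ring⟩
    · exact ⟨_, m4, _, m4a, by rw [hx]; ring⟩
    · exact ⟨_, m2, _, m4a, by rw [hx]; ring⟩
    · exact ⟨_, m1, _, m4a, by rw [hx]; ring⟩
    · exact ⟨_, m0, _, m4a, by rw [hx]; ring⟩
  have h2 : 19 ≤ (({0, d, 2*d, 4*d, 4*d+a, 5*d} : Finset ℤ) - {0, d, 2*d, 4*d, 4*d+a, 5*d}).card :=
    calc (19 : ℕ) = _ := (List.toFinset_card_of_nodup hnodup).symm
    _ ≤ _ := Finset.card_le_card hsub2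
  omega
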